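/- arXiv:2605.15504 — 3 statements merged into one kernel-verified Lean document; each statement's English description precedes it below -/
import Mathlib

section
/- Let d ≥ 2, let μ be a probability measure on the Euclidean space ℝ^d with finite first moment, let w̄ ∈ ℝ^d, and let v be a unit vector. Suppose that for every linear isometry equivalence f of ℝ^d with f(v) = v, the affine map x ↦ w̄ + f(x − w̄) pushes μ forward to itself. Let H = {x : ⟪v, x − w̄⟫ ≥ 0} and assume μ(H) > 0. Then the conditional mean m = (μ(H))⁻¹ • ∫_{H} x dμ satisfies m = w̄ + ⟪v, m − w̄⟫ • v with ⟪v, m − w̄⟫ ≥ 0; and if additionally μ({x : ⟪v, x − w̄⟫ > 0}) > 0, then ⟪v, m − w̄⟫ > 0. -/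
open MeasureTheory

/-!
The centred integral `I = ∫_H (x - w̄) dμ` is fixed by every linear isometry `f` with `f v = v`:
the affine map `x ↦ w̄ + f (x - w̄)` preserves both `μ` and `H`. Reflecting across
the hyperplane orthogonal to the component of `I` perpendicular to `v` fixes `v` and negates that
component, so it vanishes and `I` lies on the line through `v`. Its coefficient `⟪v, I⟫` is the
integral over `H` of `⟪v, x - w̄⟫`, which is nonnegative there and positive on a set of positive
measure when the open halfspace has positive mass.
-/

open scoped RealInnerProductSpace

section

variable {E : Type*} [NormedAddCommGroup E] [InnerProductSpace ℝ E]

theorem LinearIsometryEquiv.inner_apply_of_apply_eq {f : E ≃ₗᵢ[ℝ] E} {v : E} (hf : f v = v)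
    (y : E) : ⟪v, f y⟫ = ⟪v, y⟫ := by
  conv_lhs => rw [← hf]
  exact f.inner_map_map v y

theorem eq_inner_smul_of_stabilizer_fixes {v x : E} (hv : ‖v‖ = 1)
    (hx : ∀ f : E ≃ₗᵢ[ℝ] E, f v = v → f x = x) : x = ⟪v, x⟫ • v := by
  set c := ⟪v, x⟫
  set u := x - c • v
  have hxu : x = u + c • v := (sub_add_cancel x _).symm
  have huv : ⟪u, v⟫ = 0 := by
    rw [inner_sub_left, real_inner_smul_left, real_inner_self_eq_norm_sq, hv, real_inner_comm]
    ring
  let R : E ≃ₗᵢ[ℝ] E := (ℝ ∙ u)ᗮ.reflection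
  have hRv : R v = v := Submodule.reflection_mem_subspace_eq_self <|
    (Submodule.mem_orthogonal_singleton_iff_inner_right).2 huv
  have hRx : R x = -u + c • v := by
    rw [hxu, map_add, map_smul, hRv, Submodule.reflection_orthogonalComplement_singleton_eq_neg]
  have hneg : -u + c • v = u + c • v := hRx.symm.trans ((hx R hRv).trans hxu)
  have hu : (2 : ℝ) • u = 0 := by
    rw [two_smul]
    nth_rewrite 1 [← add_right_cancel hneg]
    exact neg_add_cancel u
  exact sub_eq_zero.1 ((smul_eq_zero.1 hu).resolve_left two_ne_zero)

theorem apply_setIntegral_sub_eq_of_measurePreserving [MeasurableSpace E] [BorelSpace E]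
    {μ : Measure E} {s : Set E} (w : E)
    (f : E ≃ₗᵢ[ℝ] E) (hμ : MeasurePreserving (fun x => w + f (x - w)) μ μ)
    (hs : (fun x => w + f (x - w)) ⁻¹' s = s) :
    f (∫ x in s, (x - w) ∂μ) = ∫ x in s, (x - w) ∂μ := by
  have hT : MeasurableEmbedding fun x => w + f (x - w) :=
    (((Homeomorph.subRight w).trans f.toHomeomorph).trans
      (Homeomorph.addLeft w)).measurableEmbedding
  have hchange := hμ.setIntegral_preimage_emb hT (fun y => y - w) s
  simp only [hs, add_sub_cancel_left] at hchange
  exact (f.toContinuousLinearEquiv.integral_comp_comm (fun x => x - w)).symm.trans hchange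

end

theorem setIntegral_setOf_nonneg_pos {α : Type*} [MeasurableSpace α] {μ : Measure α}
    {g : α → ℝ} (hg : Integrable g μ) (hgm : Measurable g) (hpos : 0 < μ {x | 0 < g x}) :
    0 < ∫ x in {x | 0 ≤ g x}, g x ∂μ := by
  have hS : MeasurableSet {x | 0 < g x} := measurableSet_lt measurable_const hgm
  have hH : MeasurableSet {x | 0 ≤ g x} := measurableSet_le measurable_const hgm
  calc 0 < ∫ x in {x | 0 < g x}, g x ∂μ := by
        rw [setIntegral_pos_iff_support_of_nonneg_ae
          ((ae_restrict_iff' hS).2 (.of_forall fun x hx => le_of_lt hx)) hg.integrableOn]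
        exact hpos.trans_le (measure_mono fun x hx => ⟨ne_of_gt hx, hx⟩)
    _ ≤ ∫ x in {x | 0 ≤ g x}, g x ∂μ :=
        setIntegral_mono_set hg.integrableOn ((ae_restrict_iff' hH).2 (.of_forall fun x hx => hx))
          (Filter.Eventually.of_forall fun x (hx : 0 < g x) => hx.le)

theorem stmt_3_general (d : ℕ)
    (μ : Measure (EuclideanSpace ℝ (Fin d))) [IsProbabilityMeasure μ]
    (hint : Integrable (fun x => x) μ)
    (wbar : EuclideanSpace ℝ (Fin d)) (v : EuclideanSpace ℝ (Fin d))
    (hv : ‖v‖ = 1)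
    (hsym : ∀ f : EuclideanSpace ℝ (Fin d) ≃ₗᵢ[ℝ] EuclideanSpace ℝ (Fin d),
      f v = v → Measure.map (fun x => wbar + f (x - wbar)) μ = μ)
    (H : Set (EuclideanSpace ℝ (Fin d)))
    (hH : H = {x | 0 ≤ (inner ℝ v (x - wbar) : ℝ)})
    (hHpos : 0 < μ H)
    (m : EuclideanSpace ℝ (Fin d))
    (hm : m = ((μ H).toReal)⁻¹ • ∫ x in H, x ∂μ) :
    (m = wbar + (inner ℝ v (m - wbar) : ℝ) • v ∧ 0 ≤ (inner ℝ v (m - wbar) : ℝ)) ∧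
    (0 < μ {x | 0 < (inner ℝ v (x - wbar) : ℝ)} →
      0 < (inner ℝ v (m - wbar) : ℝ)) := by
  have hg : Measurable fun x : EuclideanSpace ℝ (Fin d) => ⟪v, x - wbar⟫ := by fun_prop
  have hcentered : Integrable (fun x => x - wbar) μ := hint.sub (integrable_const wbar)
  have hc : 0 < (μ H).toReal := ENNReal.toReal_pos hHpos.ne' (measure_ne_top μ H)
  have hmI : m - wbar = (μ H).toReal⁻¹ • ∫ x in H, (x - wbar) ∂μ := by
    rw [hm, integral_sub hint.integrableOn (integrable_const wbar).integrableOn,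
      setIntegral_const, measureReal_def, smul_sub, inv_smul_smul₀ hc.ne']
  have hline : m - wbar = ⟪v, m - wbar⟫ • v := by
    refine eq_inner_smul_of_stabilizer_fixes hv fun f hf => ?_
    rw [hmI, map_smul, apply_setIntegral_sub_eq_of_measurePreserving wbar f
      ⟨by fun_prop, hsym f hf⟩ (by simp only [hH, Set.preimage_ofPred_eq, add_sub_cancel_left,
        f.inner_apply_of_apply_eq hf])]
  have hα : ⟪v, m - wbar⟫ = (μ H).toReal⁻¹ * ∫ x in H, ⟪v, x - wbar⟫ ∂μ := by
    rw [hmI, real_inner_smul_right, ← integral_inner hcentered.integrableOn]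
  subst hH
  refine ⟨⟨eq_add_of_sub_eq' hline, ?_⟩, fun hpos => ?_⟩
  · rw [hα]
    exact mul_nonneg (inv_nonneg.2 hc.le)
      (setIntegral_nonneg (measurableSet_le measurable_const hg) fun x hx => hx)
  · rw [hα]
    exact mul_pos (inv_pos.2 hc)
      (setIntegral_setOf_nonneg_pos ((innerSL ℝ v).integrable_comp hcentered) hg hpos)

/-- Key step in the proof of Theorem 3.3: for a probability measure `μ` on
`ℝ^d` (`d ≥ 2`) with finite first moment that is invariant under every rigid
rotation/reflection fixing `wbar` and the direction `v`, the conditional mean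
`m` of `μ` on the halfspace `H = {x : ⟪v, x - wbar⟫ ≥ 0}` lies on the ray
`wbar + α v` with `α = ⟪v, m - wbar⟫ ≥ 0`, and `α > 0` if the open halfspace
has positive mass. -/
theorem stmt_3 (d : ℕ) (hd : 2 ≤ d)
    (μ : Measure (EuclideanSpace ℝ (Fin d))) [IsProbabilityMeasure μ]
    (hint : Integrable (fun x => x) μ)
    (wbar : EuclideanSpace ℝ (Fin d)) (v : EuclideanSpace ℝ (Fin d))
    (hv : ‖v‖ = 1)
    (hsym : ∀ f : EuclideanSpace ℝ (Fin d) ≃ₗᵢ[ℝ] EuclideanSpace ℝ (Fin d),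
      f v = v → Measure.map (fun x => wbar + f (x - wbar)) μ = μ)
    (H : Set (EuclideanSpace ℝ (Fin d)))
    (hH : H = {x | 0 ≤ (inner ℝ v (x - wbar) : ℝ)})
    (hHpos : 0 < μ H)
    (m : EuclideanSpace ℝ (Fin d))
    (hm : m = ((μ H).toReal)⁻¹ • ∫ x in H, x ∂μ) :
    (m = wbar + (inner ℝ v (m - wbar) : ℝ) • v ∧ 0 ≤ (inner ℝ v (m - wbar) : ℝ)) ∧
    (0 < μ {x | 0 < (inner ℝ v (x - wbar) : ℝ)} →
      0 < (inner ℝ v (m - wbar) : ℝ)) :=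
  stmt_3_general d μ hint wbar v hv hsym H hH hHpos m hm
end

section
/- Let σ > 0 and π₂ ∈ (1/2, 1), and set L = log(π₂/(1 − π₂)) and m = 1 − σ·√(2L). Then L > 0, m < 1, and m satisfies the fixed-point equation m = (1 + m)/2 − (σ²/(1 − m)) · L; equivalently, (1 − m)² = 2σ²L. -/
open Real

theorem log_odds_pos {p : ℝ} (hhalf : 1 / 2 < p) (hone : p < 1) : 0 < log (p / (1 - p)) :=
  log_pos <| (one_lt_div (by linarith)).2 (by linarith)

theorem eq_fixedPoint_iff_sq {m σ L : ℝ} (hm : m ≠ 1) :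
    m = (1 + m) / 2 - (σ ^ 2 / (1 - m)) * L ↔ (1 - m) ^ 2 = 2 * σ ^ 2 * L := by
  have hgap : 1 - m ≠ 0 := sub_ne_zero.2 hm.symm
  field_simp
  constructor <;> intro h <;> linarith

/-- Closed-form fixed point of Proposition F.5: when `π₂ > 1/2`, setting
`L = log(π₂/(1 - π₂))` and `m = 1 - σ√(2L)` gives `L > 0`, `m < 1`, and `m`
satisfies the fixed-point equation `m = (1 + m)/2 - (σ²/(1 - m))·L`,
equivalently `(1 - m)² = 2σ²L`. -/
theorem stmt_16 (σ : ℝ) (hσ : 0 < σ) (π₂ : ℝ)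
    (hπ : π₂ ∈ Set.Ioo (1 / 2 : ℝ) 1)
    (L m : ℝ) (hL : L = log (π₂ / (1 - π₂))) (hm : m = 1 - σ * Real.sqrt (2 * L)) :
    0 < L ∧ m < 1 ∧ m = (1 + m) / 2 - (σ^2 / (1 - m)) * L ∧
      (1 - m)^2 = 2 * σ^2 * L := by
  have hLpos : 0 < L := hL ▸ log_odds_pos hπ.1 hπ.2
  have hgap : 1 - m = σ * √(2 * L) := by rw [hm]; ring
  have hsq : (1 - m) ^ 2 = 2 * σ ^ 2 * L := by
    rw [hgap, mul_pow, sq_sqrt (by positivity)]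
    ring
  have hm1 : m < 1 := by
    have : 0 < σ * √(2 * L) := mul_pos hσ (sqrt_pos.2 (by positivity))
    linarith
  exact ⟨hLpos, hm1, (eq_fixedPoint_iff_sq hm1.ne).2 hsq, hsq⟩
end

section
/- Let σ > 0 and π₂ ∈ (0, 1/2]. Then for every real number m < 1, (1 + m)/2 − (σ²/(1 − m)) · log(π₂/(1 − π₂)) > m. Consequently, no m < 1 satisfies the fixed-point equation m = (1 + m)/2 − (σ²/(1 − m)) · log(π₂/(1 − π₂)). -/
/-!
For `π₂ ≤ 1/2` the log-odds `log (π₂ / (1 - π₂))` is nonpositive, so the correction term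
`-(σ² / (1 - m)) · log (π₂ / (1 - π₂))` is nonnegative whenever `m < 1`, while the midpoint
`(1 + m) / 2` already lies strictly above `m`.
-/

open Real

theorem log_div_one_sub_nonpos {p : ℝ} (hp₀ : 0 ≤ p) (hp : p ≤ 1 / 2) :
    log (p / (1 - p)) ≤ 0 :=
  log_nonpos (div_nonneg hp₀ (by linarith)) ((div_le_one (by linarith)).mpr (by linarith))

theorem lt_add_div_two_sub_div_mul {m c L : ℝ} (hm : m < 1) (hc : 0 ≤ c) (hL : L ≤ 0) :
    m < (1 + m) / 2 - c / (1 - m) * L := by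
  have hcorr : c / (1 - m) * L ≤ 0 :=
    mul_nonpos_of_nonneg_of_nonpos (div_nonneg hc (by linarith)) hL
  linarith

theorem stmt_17_general (σ : ℝ) (π₂ : ℝ)
    (hπ : π₂ ∈ Set.Ioc (0 : ℝ) (1 / 2)) :
    (∀ m : ℝ, m < 1 →
      (1 + m) / 2 - (σ^2 / (1 - m)) * log (π₂ / (1 - π₂)) > m) ∧
    ¬∃ m : ℝ, m < 1 ∧
      m = (1 + m) / 2 - (σ^2 / (1 - m)) * log (π₂ / (1 - π₂)) := by
  have hlog := log_div_one_sub_nonpos hπ.1.le hπ.2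
  have hgt : ∀ m : ℝ, m < 1 → (1 + m) / 2 - (σ^2 / (1 - m)) * log (π₂ / (1 - π₂)) > m :=
    fun m hm => lt_add_div_two_sub_div_mul hm (sq_nonneg σ) hlog
  exact ⟨hgt, fun ⟨m, hm, hfix⟩ => (hgt m hm).ne hfix⟩

/-- Nonexistence part of Proposition F.5: when `π₂ ≤ 1/2`, for every `m < 1`
the balancing interpretation `t*(m) = (1 + m)/2 - (σ²/(1 - m))·log(π₂/(1 - π₂))`
strictly exceeds `m`, so no `m < 1` satisfies the fixed-point equation. -/
theorem stmt_17 (σ : ℝ) (hσ : 0 < σ) (π₂ : ℝ)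
    (hπ : π₂ ∈ Set.Ioc (0 : ℝ) (1 / 2)) :
    (∀ m : ℝ, m < 1 →
      (1 + m) / 2 - (σ^2 / (1 - m)) * log (π₂ / (1 - π₂)) > m) ∧
    ¬∃ m : ℝ, m < 1 ∧
      m = (1 + m) / 2 - (σ^2 / (1 - m)) * log (π₂ / (1 - π₂)) :=
  stmt_17_general σ π₂ hπ
end
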